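/- arXiv:1912.04417 — 2 statements merged into one kernel-verified Lean document; each statement's English description precedes it below -/
import Mathlib

section
/- Let f be a holomorphic function on the open unit disk 𝔻 with power series f(z) = ∑_{j=0}^∞ a_j z^j. Then ∫_𝔻 |f(z)|² dλ(z) = π ∑_{j=0}^∞ |a_j|²/(j+1), as an equality in [0, ∞]. -/
/-!
In polar coordinates the integral becomes `∫₀¹ r (∫_{-π}^{π} |f(r e^{iθ})|² dθ) dr`. For `r < 1`
the series `∑ aⱼ rʲ e^{ijθ}` converges absolutely, so it is the Fourier series of
`θ ↦ f(r e^{iθ})` and Parseval gives `2π ∑ |aⱼ|² r^{2j}`. Integrating term by term against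
`r dr` (Tonelli, in `[0, ∞]`) yields `2π ∑ |aⱼ|² / (2j + 2)`.
-/

open MeasureTheory Set Metric AddCircle
open scoped ENNReal Real

theorem summable_norm_mul_pow_of_summable_mul_pow {𝕜 : Type*} [NormedField 𝕜] {a : ℕ → 𝕜}
    {z w : 𝕜} (h : Summable fun j => a j * z ^ j) (hwz : ‖w‖ < ‖z‖) :
    Summable fun j => ‖a j * w ^ j‖ := by
  obtain ⟨C, hC⟩ := h.tendsto_atTop_zero.norm.bddAbove_range
  have hz : 0 < ‖z‖ := (norm_nonneg w).trans_lt hwz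
  refine .of_nonneg_of_le (fun j => norm_nonneg _) (fun j => ?_)
    ((summable_geometric_of_lt_one (by positivity) ((div_lt_one hz).2 hwz)).mul_left C)
  calc ‖a j * w ^ j‖ = ‖a j * z ^ j‖ * (‖w‖ / ‖z‖) ^ j := by
        rw [norm_mul, norm_mul, norm_pow, norm_pow, div_pow, mul_assoc,
          mul_div_cancel₀ _ (pow_pos hz j).ne']
    _ ≤ C * (‖w‖ / ‖z‖) ^ j := by gcongr; exact hC ⟨j, rfl⟩

theorem summable_norm_mul_pow_of_mem_ball {a : ℕ → ℂ} {R : ℝ}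
    (ha : ∀ z ∈ ball (0 : ℂ) R, Summable fun j => a j * z ^ j) {w : ℂ} (hw : w ∈ ball (0 : ℂ) R) :
    Summable fun j => ‖a j * w ^ j‖ := by
  rw [mem_ball_zero_iff] at hw
  have hz : (((‖w‖ + R) / 2 : ℝ) : ℂ) ∈ ball (0 : ℂ) R := by
    rw [mem_ball_zero_iff, Complex.norm_real, Real.norm_of_nonneg (by linarith [norm_nonneg w])]
    linarith
  refine summable_norm_mul_pow_of_summable_mul_pow (ha _ hz) ?_
  rw [Complex.norm_real, Real.norm_of_nonneg (by linarith [norm_nonneg w])]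
  linarith

section Fourier

variable {T : ℝ}

theorem continuous_tsum_mul_fourier {c : ℤ → ℂ} (hc : Summable c) :
    Continuous fun t : AddCircle T => ∑' n, c n * fourier n t :=
  continuous_tsum (fun n => by fun_prop) hc.norm fun n t => by
    simp [fourier_apply, Circle.norm_coe]

variable [Fact (0 < T)]

theorem fourierCoeff_tsum_mul_fourier {c : ℤ → ℂ} (hc : Summable c) (m : ℤ) :
    fourierCoeff (fun t : AddCircle T => ∑' n, c n * fourier n t) m = c m := by
  have hterm (n : ℤ) : ∫ t : AddCircle T, c n * (fourier (-m) t * fourier n t) ∂haarAddCircle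
      = c n * (Pi.single n 1 : ℤ → ℂ) m := by
    rw [integral_const_mul, ← fourierCoeff_fourier (T := T) n]
    rfl
  have hnorm (n : ℤ) (t : AddCircle T) : ‖c n * (fourier (-m) t * fourier n t)‖ = ‖c n‖ := by
    simp [fourier_apply, Circle.norm_coe]
  calc fourierCoeff (fun t : AddCircle T => ∑' n, c n * fourier n t) m
      = ∫ t, ∑' n, c n * (fourier (-m) t * fourier n t) ∂haarAddCircle := by
        refine integral_congr_ae (ae_of_all _ fun t => ?_)
        simp only [smul_eq_mul, ← tsum_mul_left]
        exact tsum_congr fun n => by ring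
    _ = ∑' n, c n * (Pi.single n 1 : ℤ → ℂ) m := by
        rw [← integral_tsum_of_summable_integral_norm]
        · exact tsum_congr hterm
        · exact fun n => Continuous.integrable_of_hasCompactSupport (by fun_prop)
            (HasCompactSupport.of_compactSpace _)
        · simpa only [hnorm, integral_const, probReal_univ, one_smul] using hc.norm
    _ = c m := by
        rw [tsum_eq_single m fun n hn => by simp [Ne.symm hn]]
        simp

theorem lintegral_enorm_tsum_mul_fourier_sq {c : ℤ → ℂ} (hc : Summable c) :
    ∫⁻ t : AddCircle T, ‖∑' n, c n * fourier n t‖ₑ ^ 2 ∂haarAddCircle = ∑' n, ‖c n‖ₑ ^ 2 := by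
  set F : C(AddCircle T, ℂ) := ⟨_, continuous_tsum_mul_fourier hc⟩
  have hparseval := hasSum_sq_fourierCoeff (F.toLp 2 haarAddCircle ℂ)
  have hcoeff : fourierCoeff F = c := funext (fourierCoeff_tsum_mul_fourier hc)
  have hL2 : ∫ t, ‖F.toLp 2 haarAddCircle ℂ t‖ ^ 2 ∂haarAddCircle
      = ∫ t, ‖F t‖ ^ 2 ∂haarAddCircle :=
    integral_congr_ae <| by
      filter_upwards [ContinuousMap.coeFn_toLp (𝕜 := ℂ) (p := 2) haarAddCircle F] with t ht
      rw [ht]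
  simp only [fourierCoeff_toLp, hcoeff, hL2] at hparseval
  have hint : Integrable (fun t => ‖F t‖ ^ 2) haarAddCircle :=
    Continuous.integrable_of_hasCompactSupport (by fun_prop) (HasCompactSupport.of_compactSpace _)
  simp only [← ofReal_norm, ← ENNReal.ofReal_pow (norm_nonneg _)]
  rw [← ENNReal.ofReal_tsum_of_nonneg (fun n => by positivity) hparseval.summable,
    hparseval.tsum_eq,
    ofReal_integral_eq_lintegral_ofReal hint (ae_of_all _ fun t => by positivity)]
  rfl

theorem lintegral_enorm_tsum_nat_mul_fourier_sq {c : ℕ → ℂ} (hc : Summable c) :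
    ∫⁻ t : AddCircle T, ‖∑' n : ℕ, c n * fourier n t‖ₑ ^ 2 ∂haarAddCircle
      = ∑' n, ‖c n‖ₑ ^ 2 := by
  set c' : ℤ → ℂ := Function.extend Nat.cast c 0
  have hc' (n : ℕ) : c' n = c n := Nat.cast_injective.extend_apply c 0 n
  have hc'_zero {n : ℤ} (hn : n ∉ range ((↑) : ℕ → ℤ)) : c' n = 0 :=
    Function.extend_apply' _ _ _ fun ⟨k, hk⟩ => hn ⟨k, hk⟩
  have hseries (t : AddCircle T) :
      ∑' n : ℕ, c n * fourier n t = ∑' n : ℤ, c' n * fourier n t := by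
    simp only [← hc']
    exact Nat.cast_injective.tsum_eq (f := fun n => c' n * fourier n t)
      fun n hn => by_contra fun h => hn (by simp [hc'_zero h])
  have hcoeffs : ∑' n : ℕ, ‖c n‖ₑ ^ 2 = ∑' n : ℤ, ‖c' n‖ₑ ^ 2 := by
    simp only [← hc']
    exact Nat.cast_injective.tsum_eq (f := fun n => ‖c' n‖ₑ ^ 2)
      fun n hn => by_contra fun h => hn (by simp [hc'_zero h])
  simp only [hseries, hcoeffs]
  exact lintegral_enorm_tsum_mul_fourier_sq ((summable_extend_zero Nat.cast_injective).2 hc)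

end Fourier

section Circle

local instance : Fact (0 < 2 * π) := ⟨Real.two_pi_pos⟩

theorem circleMap_zero_eq_mul_toCircle (r θ : ℝ) :
    circleMap 0 r θ = r * (toCircle (θ : AddCircle (2 * π)) : ℂ) := by
  simp [circleMap, toCircle, Circle.coe_exp]

theorem mul_toCircle_pow (r : ℝ) (x : AddCircle (2 * π)) (j : ℕ) :
    ((r : ℂ) * toCircle x) ^ j = (r : ℂ) ^ j * fourier j x := by
  simp [mul_pow, fourier_apply, AddCircle.toCircle_nsmul]

theorem lintegral_enorm_tsum_mul_circleMap_pow_sq {a : ℕ → ℂ} {r : ℝ} (hr : 0 ≤ r)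
    (ha : Summable fun j => a j * (r : ℂ) ^ j) :
    ∫⁻ θ in Ioo (-π) π, ‖∑' j, a j * circleMap 0 r θ ^ j‖ₑ ^ 2
      = ENNReal.ofReal (2 * π) * ∑' j, ‖a j‖ₑ ^ 2 * ENNReal.ofReal r ^ (2 * j) := by
  set G : AddCircle (2 * π) → ℝ≥0∞ := fun x => ‖∑' j, a j * ((r : ℂ) * toCircle x) ^ j‖ₑ ^ 2
  calc ∫⁻ θ in Ioo (-π) π, ‖∑' j, a j * circleMap 0 r θ ^ j‖ₑ ^ 2
      = ∫⁻ θ in Ioc (-π) (-π + 2 * π), G θ := by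
        rw [show -π + 2 * π = π by ring, setLIntegral_congr Ioo_ae_eq_Ioc]
        simp only [G, circleMap_zero_eq_mul_toCircle]
    _ = ENNReal.ofReal (2 * π) * ∫⁻ x, G x ∂haarAddCircle := by
        rw [AddCircle.lintegral_preimage, volume_eq_smul_haarAddCircle, lintegral_smul_measure,
          smul_eq_mul]
    _ = ENNReal.ofReal (2 * π) * ∑' j, ‖a j * (r : ℂ) ^ j‖ₑ ^ 2 := by
        simp only [G, mul_toCircle_pow, ← mul_assoc]
        rw [lintegral_enorm_tsum_nat_mul_fourier_sq ha]
    _ = ENNReal.ofReal (2 * π) * ∑' j, ‖a j‖ₑ ^ 2 * ENNReal.ofReal r ^ (2 * j) := by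
        have hr' : ‖(r : ℂ)‖ₑ = ENNReal.ofReal r := by
          rw [← ofReal_norm, Complex.norm_real, Real.norm_of_nonneg hr]
        simp only [enorm_mul, enorm_pow, hr', mul_pow, ← pow_mul, mul_comm _ 2]

end Circle

theorem Complex.polarCoord_symm_eq_circleMap (p : ℝ × ℝ) :
    Complex.polarCoord.symm p = circleMap 0 p.1 p.2 := by
  simp [circleMap, Complex.exp_mul_I]

theorem lintegral_ball_zero_eq_lintegral_circleMap {g : ℂ → ℝ≥0∞} {R : ℝ}
    (hg : Measurable ((ball (0 : ℂ) R).indicator g)) :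
    ∫⁻ z in ball (0 : ℂ) R, g z
      = ∫⁻ r in Ioo 0 R, ENNReal.ofReal r * ∫⁻ θ in Ioo (-π) π, g (circleMap 0 r θ) := by
  have hind {r : ℝ} (hr : 0 < r) (θ : ℝ) : (ball (0 : ℂ) R).indicator g (circleMap 0 r θ)
      = (Iio R).indicator (fun _ => g (circleMap 0 r θ)) r := by
    simp [indicator, abs_of_pos hr]
  rw [← lintegral_indicator measurableSet_ball, ← Complex.lintegral_comp_polarCoord_symm,
    polarCoord_target, Measure.volume_eq_prod, ← Measure.prod_restrict]
  simp only [Complex.polarCoord_symm_eq_circleMap, smul_eq_mul]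
  have hcont : Continuous fun p : ℝ × ℝ => circleMap 0 p.1 p.2 := by fun_prop
  have hmeas : Measurable fun p : ℝ × ℝ =>
      ENNReal.ofReal p.1 * (ball (0 : ℂ) R).indicator g (circleMap 0 p.1 p.2) :=
    measurable_fst.ennreal_ofReal.mul (hg.comp hcont.measurable)
  rw [lintegral_prod _ hmeas.aemeasurable,
    show Ioo (0 : ℝ) R = Iio R ∩ Ioi 0 from Iio_inter_Ioi.symm,
    ← Measure.restrict_restrict measurableSet_Iio,
    ← lintegral_indicator measurableSet_Iio]
  refine setLIntegral_congr_fun measurableSet_Ioi fun r hr => ?_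
  simp only [hind hr]
  by_cases hrR : r < R <;> simp [hrR, lintegral_const_mul' _ _ ENNReal.ofReal_ne_top]

theorem lintegral_Ioo_zero_one_ofReal_pow (n : ℕ) :
    ∫⁻ r in Ioo (0 : ℝ) 1, ENNReal.ofReal r ^ n = ((n : ℝ≥0∞) + 1)⁻¹ := by
  have hint : IntegrableOn (fun r : ℝ => r ^ n) (Ioo 0 1) :=
    (continuous_pow n).integrableOn_Icc.mono_set Ioo_subset_Icc_self
  calc ∫⁻ r in Ioo (0 : ℝ) 1, ENNReal.ofReal r ^ n
      = ∫⁻ r in Ioo (0 : ℝ) 1, ENNReal.ofReal (r ^ n) :=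
        setLIntegral_congr_fun measurableSet_Ioo fun r hr => (ENNReal.ofReal_pow hr.1.le n).symm
    _ = ENNReal.ofReal (∫ r in (0 : ℝ)..1, r ^ n) := by
        rw [← ofReal_integral_eq_lintegral_ofReal hint
          ((ae_restrict_iff' measurableSet_Ioo).2 (ae_of_all _ fun r hr => pow_nonneg hr.1.le n)),
          intervalIntegral.integral_of_le zero_le_one, integral_Ioc_eq_integral_Ioo]
    _ = ((n : ℝ≥0∞) + 1)⁻¹ := by
        rw [integral_pow, one_pow, zero_pow n.succ_ne_zero, sub_zero, one_div,
          ENNReal.ofReal_inv_of_pos (by positivity), ENNReal.ofReal_add (by positivity) zero_le_one,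
          ENNReal.ofReal_natCast, ENNReal.ofReal_one]

theorem lintegral_Ioo_zero_one_ofReal_mul_two_pi_mul_tsum (b : ℕ → ℝ≥0∞) :
    ∫⁻ r in Ioo (0 : ℝ) 1,
        ENNReal.ofReal r * (ENNReal.ofReal (2 * π) * ∑' j, b j * ENNReal.ofReal r ^ (2 * j))
      = ENNReal.ofReal π * ∑' j, b j / ((j : ℝ≥0∞) + 1) := by
  have h2π : ENNReal.ofReal (2 * π) = 2 * ENNReal.ofReal π := by
    rw [ENNReal.ofReal_mul zero_le_two, ENNReal.ofReal_ofNat]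
  have hinv (j : ℕ) : ((2 * j + 1 : ℕ) + 1 : ℝ≥0∞)⁻¹ = 2⁻¹ * ((j : ℝ≥0∞) + 1)⁻¹ := by
    rw [← ENNReal.mul_inv (by simp) (by simp)]
    push_cast
    congr 1
    ring
  calc ∫⁻ r in Ioo (0 : ℝ) 1,
        ENNReal.ofReal r * (ENNReal.ofReal (2 * π) * ∑' j, b j * ENNReal.ofReal r ^ (2 * j))
      = ∫⁻ r in Ioo (0 : ℝ) 1,
          ∑' j, ENNReal.ofReal (2 * π) * b j * ENNReal.ofReal r ^ (2 * j + 1) := by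
        refine lintegral_congr fun r => ?_
        rw [← ENNReal.tsum_mul_left, ← ENNReal.tsum_mul_left]
        exact tsum_congr fun j => by ring
    _ = ∑' j, ENNReal.ofReal (2 * π) * b j * ((2 * j + 1 : ℕ) + 1 : ℝ≥0∞)⁻¹ := by
        rw [lintegral_tsum fun j => by fun_prop]
        refine tsum_congr fun j => ?_
        rw [lintegral_const_mul _ (by fun_prop), lintegral_Ioo_zero_one_ofReal_pow]
    _ = ∑' j, (2 * 2⁻¹) * (ENNReal.ofReal π * (b j / ((j : ℝ≥0∞) + 1))) := by
        refine tsum_congr fun j => ?_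
        rw [h2π, hinv, div_eq_mul_inv]
        ring
    _ = ENNReal.ofReal π * ∑' j, b j / ((j : ℝ≥0∞) + 1) := by
        simp only [ENNReal.mul_inv_cancel two_ne_zero ENNReal.ofNat_ne_top, one_mul]
        exact ENNReal.tsum_mul_left

theorem stmt10 (f : ℂ → ℂ) (a : ℕ → ℂ)
    (hf : DifferentiableOn ℂ f (ball (0 : ℂ) 1))
    (ha : ∀ z ∈ ball (0 : ℂ) 1, HasSum (fun j : ℕ => a j * z ^ j) (f z)) :
    ∫⁻ z in ball (0 : ℂ) 1, (‖f z‖₊ : ℝ≥0∞) ^ 2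
      = ENNReal.ofReal Real.pi *
        ∑' j : ℕ, (‖a j‖₊ : ℝ≥0∞) ^ 2 / ((j : ℝ≥0∞) + 1) := by
  have hmeas : Measurable ((ball (0 : ℂ) 1).indicator fun z => ‖f z‖ₑ ^ 2) := by
    classical
    rw [← piecewise_eq_indicator]
    exact ((ENNReal.continuous_pow 2).comp_continuousOn
      hf.continuousOn.enorm).measurable_piecewise continuousOn_const measurableSet_ball
  have hcircle {r : ℝ} (hr : r ∈ Ioo (0 : ℝ) 1) :
      ∫⁻ θ in Ioo (-π) π, ‖f (circleMap 0 r θ)‖ₑ ^ 2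
        = ENNReal.ofReal (2 * π) * ∑' j, ‖a j‖ₑ ^ 2 * ENNReal.ofReal r ^ (2 * j) := by
    have hr_mem : (r : ℂ) ∈ ball (0 : ℂ) 1 := by simpa [abs_of_pos hr.1] using hr.2
    have hmem (θ : ℝ) : circleMap 0 r θ ∈ ball (0 : ℂ) 1 := by simpa [abs_of_pos hr.1] using hr.2
    simp only [fun θ => ((ha _ (hmem θ)).tsum_eq).symm]
    exact lintegral_enorm_tsum_mul_circleMap_pow_sq hr.1.le
      (summable_norm_mul_pow_of_mem_ball (fun z hz => (ha z hz).summable) hr_mem).of_norm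
  simp only [← enorm_eq_nnnorm]
  rw [lintegral_ball_zero_eq_lintegral_circleMap hmeas,
    setLIntegral_congr_fun measurableSet_Ioo fun r hr => by rw [hcircle hr],
    lintegral_Ioo_zero_one_ofReal_mul_two_pi_mul_tsum]
end

section
/- Let α > −1 be real and m ≥ 2 an integer. Then there exists a constant C > 0 such that for every t > 0, 0 ≤ ϖ_{(α,m)}(t) ≤ C · t^{m−1} · √t · e^{−t}. In particular the Laplace transform ∫_0^∞ e^{−λt} ϖ_{(α,m)}(t) dt is finite for every λ > −1. -/
open MeasureTheory Set

/-- Convolution of functions on `(0,∞)`: `f*g(x) = ∫_0^x f(x−y) g(y) dy`. -/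
noncomputable def posConv (f g : ℝ → ℝ) : ℝ → ℝ := fun x =>
  ∫ y in (0 : ℝ)..x, f (x - y) * g y

/-- The function `(√t e^{−ℓt}) * (t^{−1/2} e^{−(α+ℓ)t})`. -/
noncomputable def phiFun (α : ℝ) (ℓ : ℕ) : ℝ → ℝ :=
  posConv (fun t => Real.sqrt t * Real.exp (-(ℓ : ℝ) * t))
    (fun t => Real.exp (-(α + ℓ) * t) / Real.sqrt t)

/-- `ϖ_{(α,m)}`: the convolution of `t ↦ √t e^{−t}` with the `m−1` functions
`(√t e^{−ℓt}) * (t^{−1/2} e^{−(α+ℓ)t})` for `ℓ = 2, …, m`. -/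
noncomputable def varpi (α : ℝ) (m : ℕ) : ℝ → ℝ :=
  (List.range (m - 1)).foldl (fun f k => posConv f (phiFun α (k + 2)))
    (fun t => Real.sqrt t * Real.exp (-t))

/-!
With `ε = min (1 + α) 1 > 0`, each kernel `φ_ℓ`, `ℓ ≥ 2`, satisfies `φ_ℓ(t) ≤ 2t e^{-(1+ε)t}`:
its exponent `-ℓ(t-y) - (α+ℓ)y` is at most `-(1+ε)t`, and `∫_0^t y^{-1/2} dy = 2√t`.
If `0 ≤ f(t) ≤ A t^k √t e^{-t}`, then in `f * φ_ℓ` the factor `e^{-t}` comes out and the kernel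
leaves `y e^{-εy} ≤ 1/ε`, so `f * φ_ℓ` obeys the same kind of bound with `(2A/ε, k+1)`.
Starting from `√t e^{-t}` and convolving `m-1` times gives `C = (2/ε)^{m-1}`; the Laplace
transform at `λ > -1` is then dominated by a Gamma integral.
-/

open Real

section posConv

variable {f g : ℝ → ℝ}

theorem posConv_eq_zero_of_nonpos (hf : ∀ t ≤ 0, f t = 0) {t : ℝ} (ht : t ≤ 0) :
    posConv f g t = 0 := by
  have hzero : EqOn (fun y => f (t - y) * g y) 0 (uIcc 0 t) := by
    intro y hy
    rw [uIcc_of_ge ht] at hy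
    simp [hf (t - y) (by linarith [hy.1])]
  rw [posConv, intervalIntegral.integral_congr hzero, Pi.zero_def,
    intervalIntegral.integral_zero]

theorem posConv_nonneg (hf : ∀ t, 0 ≤ f t) (hg : ∀ t, 0 ≤ g t) {t : ℝ} (ht : 0 ≤ t) :
    0 ≤ posConv f g t :=
  intervalIntegral.integral_nonneg ht fun _ _ => mul_nonneg (hf _) (hg _)

theorem posConv_le_integral {h : ℝ → ℝ} {t : ℝ} (ht : 0 ≤ t)
    (hh : IntervalIntegrable h volume 0 t) (hfg : ∀ y ∈ Ioc 0 t, 0 ≤ f (t - y) * g y)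
    (hle : ∀ y ∈ Ioc 0 t, f (t - y) * g y ≤ h y) :
    posConv f g t ≤ ∫ y in (0 : ℝ)..t, h y := by
  rw [posConv, intervalIntegral.integral_of_le ht, intervalIntegral.integral_of_le ht]
  exact integral_mono_of_nonneg (ae_restrict_of_forall_mem measurableSet_Ioc hfg) hh.1
    (ae_restrict_of_forall_mem measurableSet_Ioc hle)

theorem measurable_setIntegral_Ioc {F : ℝ × ℝ → ℝ} (hF : Measurable F) {a b : ℝ → ℝ}
    (ha : Measurable a) (hb : Measurable b) :
    Measurable fun x => ∫ y in Ioc (a x) (b x), F (x, y) := by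
  have hS : MeasurableSet {p : ℝ × ℝ | a p.1 < p.2 ∧ p.2 ≤ b p.1} :=
    (measurableSet_lt (ha.comp measurable_fst) measurable_snd).inter
      (measurableSet_le measurable_snd (hb.comp measurable_fst))
  convert (hF.indicator hS).stronglyMeasurable.integral_prod_right' (ν := volume) |>.measurable
    using 2 with x
  rw [← integral_indicator measurableSet_Ioc]
  rfl

theorem measurable_posConv (hf : Measurable f) (hg : Measurable g) :
    Measurable (posConv f g) := by
  have hF : Measurable fun p : ℝ × ℝ => f (p.1 - p.2) * g p.2 := by fun_prop
  exact (measurable_setIntegral_Ioc hF measurable_const measurable_id).sub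
    (measurable_setIntegral_Ioc hF measurable_id measurable_const)

end posConv

theorem phiFun_nonneg (α : ℝ) (ℓ : ℕ) (t : ℝ) : 0 ≤ phiFun α ℓ t := by
  rcases le_or_gt t 0 with ht | ht
  · rw [phiFun, posConv_eq_zero_of_nonpos (fun s hs => by simp [sqrt_eq_zero'.2 hs]) ht]
  · exact posConv_nonneg (fun _ => by positivity) (fun _ => by positivity) ht.le

theorem measurable_phiFun (α : ℝ) (ℓ : ℕ) : Measurable (phiFun α ℓ) :=
  measurable_posConv (by fun_prop) (by fun_prop)

theorem phiFun_le {α ε : ℝ} {ℓ : ℕ} (hℓ : 2 ≤ ℓ) (hεα : ε ≤ 1 + α) (hε1 : ε ≤ 1) {t : ℝ}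
    (ht : 0 ≤ t) : phiFun α ℓ t ≤ 2 * t * exp (-(1 + ε) * t) := by
  have hbound : ∀ y ∈ Ioc 0 t,
      √(t - y) * exp (-(ℓ : ℝ) * (t - y)) * (exp (-(α + ℓ) * y) / √y) ≤
        √t * exp (-(1 + ε) * t) * y ^ (-(1 / 2) : ℝ) := by
    rintro y ⟨hy, hyt⟩
    have hexponent : -(ℓ : ℝ) * (t - y) + -(α + ℓ) * y ≤ -(1 + ε) * t := by
      have hℓ' : (2 : ℝ) ≤ ℓ := by exact_mod_cast hℓ
      linarith [mul_nonneg (sub_nonneg.2 hεα) hy.le, mul_le_mul_of_nonneg_right hℓ' ht,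
        mul_nonneg (sub_nonneg.2 hε1) (sub_nonneg.2 hyt)]
    rw [rpow_neg hy.le, ← sqrt_eq_rpow, div_eq_mul_inv, ← mul_assoc,
      mul_assoc √(t - y), ← exp_add]
    gcongr
    linarith
  calc phiFun α ℓ t
      ≤ ∫ y in (0 : ℝ)..t, √t * exp (-(1 + ε) * t) * y ^ (-(1 / 2) : ℝ) :=
        posConv_le_integral ht
          ((intervalIntegral.intervalIntegrable_rpow' (by norm_num)).const_mul _)
          (fun _ _ => by positivity) hbound
    _ = 2 * t * exp (-(1 + ε) * t) := by
        rw [intervalIntegral.integral_const_mul, integral_rpow (Or.inl (by norm_num)),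
          zero_rpow (by norm_num), sub_zero, show (-(1 / 2) : ℝ) + 1 = 1 / 2 by norm_num,
          ← sqrt_eq_rpow]
        linear_combination 2 * exp (-(1 + ε) * t) * mul_self_sqrt ht

/-- Since `√t = 0` for `t ≤ 0`, such an `f` vanishes on `(-∞, 0]`. -/
structure GammaTypeBound (A : ℝ) (k : ℕ) (f : ℝ → ℝ) : Prop where
  measurable : Measurable f
  nonneg : ∀ t, 0 ≤ f t
  le : ∀ t, f t ≤ A * t ^ k * √t * exp (-t)

namespace GammaTypeBound

variable {A : ℝ} {k : ℕ} {f g : ℝ → ℝ}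

theorem eq_zero_of_nonpos (hf : GammaTypeBound A k f) {t : ℝ} (ht : t ≤ 0) : f t = 0 :=
  le_antisymm (by simpa [sqrt_eq_zero'.2 ht] using hf.le t) (hf.nonneg t)

theorem const_nonneg (hf : GammaTypeBound A k f) : 0 ≤ A := by
  have h := (hf.nonneg 1).trans (hf.le 1)
  simp only [one_pow, mul_one, sqrt_one] at h
  exact nonneg_of_mul_nonneg_left h (exp_pos _)

theorem apply_sub_mul_le {B ε : ℝ} (hf : GammaTypeBound A k f) (hg0 : ∀ t, 0 ≤ g t)
    (hε : 0 < ε) (hg : ∀ t, 0 < t → g t ≤ B * t * exp (-(1 + ε) * t)) {t y : ℝ} (hy : y ∈ Ioc 0 t) :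
    f (t - y) * g y ≤ A * B / ε * t ^ k * √t * exp (-t) := by
  obtain ⟨hy0, hyt⟩ := hy
  have ht : 0 ≤ t := hy0.le.trans hyt
  have hA := hf.const_nonneg
  have hB : 0 ≤ B := by
    have h := (hg0 y).trans (hg y hy0)
    exact nonneg_of_mul_nonneg_left (nonneg_of_mul_nonneg_left h (exp_pos _)) hy0
  have hf_le : f (t - y) ≤ A * t ^ k * √t * exp (-(t - y)) := by
    refine (hf.le _).trans ?_
    gcongr <;> bound
  have hexp : exp (-(t - y)) * exp (-(1 + ε) * y) = exp (-t) * exp (-(ε * y)) := by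
    rw [← exp_add, ← exp_add]
    ring_nf
  -- `ε y e^{-ε y} ≤ e^{-1} ≤ 1`
  have hdecay : y * exp (-(ε * y)) ≤ 1 / ε := by
    rw [le_div_iff₀ hε, mul_comm, ← mul_assoc]
    exact (mul_exp_neg_le_exp_neg_one _).trans (exp_le_one_iff.2 (by norm_num))
  calc f (t - y) * g y
      ≤ A * t ^ k * √t * exp (-(t - y)) * (B * y * exp (-(1 + ε) * y)) :=
        mul_le_mul hf_le (hg y hy0) (hg0 y) (by bound)
    _ = A * B * t ^ k * √t * exp (-t) * (y * exp (-(ε * y))) := by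
        linear_combination A * B * t ^ k * √t * y * hexp
    _ ≤ A * B * t ^ k * √t * exp (-t) * (1 / ε) := mul_le_mul_of_nonneg_left hdecay (by bound)
    _ = A * B / ε * t ^ k * √t * exp (-t) := by ring

theorem posConv {B ε : ℝ} (hf : GammaTypeBound A k f) (hgm : Measurable g)
    (hg0 : ∀ t, 0 ≤ g t) (hε : 0 < ε) (hg : ∀ t, 0 < t → g t ≤ B * t * exp (-(1 + ε) * t)) :
    GammaTypeBound (A * B / ε) (k + 1) (posConv f g) where
  measurable := measurable_posConv hf.measurable hgm
  nonneg t := by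
    rcases le_or_gt t 0 with ht | ht
    · rw [posConv_eq_zero_of_nonpos (fun _ => hf.eq_zero_of_nonpos) ht]
    · exact posConv_nonneg hf.nonneg hg0 ht.le
  le t := by
    rcases le_or_gt t 0 with ht | ht
    · rw [posConv_eq_zero_of_nonpos (fun _ => hf.eq_zero_of_nonpos) ht, sqrt_eq_zero'.2 ht]
      simp
    calc _ ≤ ∫ _ in (0 : ℝ)..t, A * B / ε * t ^ k * √t * exp (-t) :=
          posConv_le_integral ht.le intervalIntegrable_const
            (fun _ _ => mul_nonneg (hf.nonneg _) (hg0 _))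
            fun _ hy => hf.apply_sub_mul_le hg0 hε hg hy
      _ = A * B / ε * t ^ (k + 1) * √t * exp (-t) := by
        rw [intervalIntegral.integral_const, smul_eq_mul]
        ring

theorem integrableOn_exp_mul (hf : GammaTypeBound A k f) {l : ℝ} (hl : -1 < l) :
    IntegrableOn (fun t => exp (-l * t) * f t) (Ioi 0) := by
  have hdom : IntegrableOn (fun t : ℝ => A * (t ^ ((k : ℝ) + 1 / 2) *
      exp (-(1 + l) * t ^ (1 : ℝ)))) (Ioi 0) :=
    (integrableOn_rpow_mul_exp_neg_mul_rpow (by linarith [k.cast_nonneg (α := ℝ)]) one_pos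
      (by linarith)).const_mul A
  refine hdom.mono' ((by fun_prop : Measurable fun t => exp (-l * t)).mul
    hf.measurable).aestronglyMeasurable ?_
  filter_upwards [ae_restrict_mem measurableSet_Ioi] with t (ht : 0 < t)
  rw [norm_of_nonneg (mul_nonneg (exp_pos _).le (hf.nonneg t)), rpow_one, rpow_add ht,
    rpow_natCast, ← sqrt_eq_rpow, show -(1 + l) * t = -l * t + -t by ring, exp_add]
  calc exp (-l * t) * f t ≤ exp (-l * t) * (A * t ^ k * √t * exp (-t)) := by
        gcongr
        exact hf.le t
    _ = _ := by ring

end GammaTypeBound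

theorem gammaTypeBound_varpi {α : ℝ} (hα : -1 < α) (m : ℕ) :
    GammaTypeBound ((2 / min (1 + α) 1) ^ (m - 1)) (m - 1) (varpi α m) := by
  set ε := min (1 + α) 1
  have hε : 0 < ε := lt_min (by linarith) one_pos
  suffices ∀ n, GammaTypeBound ((2 / ε) ^ n) n ((List.range n).foldl
      (fun f k => posConv f (phiFun α (k + 2))) fun t => √t * exp (-t)) from this (m - 1)
  intro n
  induction n with
  | zero =>
    simp only [List.range_zero, List.foldl_nil, pow_zero]
    exact ⟨by fun_prop, fun t => by positivity, fun t => by simp⟩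
  | succ n ih =>
    rw [List.range_succ, List.foldl_append, List.foldl_cons, List.foldl_nil, pow_succ,
      ← mul_div_assoc]
    exact ih.posConv (measurable_phiFun α _) (phiFun_nonneg α _) hε
      fun t ht => phiFun_le (by omega) (min_le_left _ _) (min_le_right _ _) ht.le

theorem stmt17_general (α : ℝ) (hα : -1 < α) (m : ℕ) :
    (∃ C : ℝ, 0 < C ∧ ∀ t : ℝ, 0 < t →
      0 ≤ varpi α m t ∧
      varpi α m t ≤ C * t ^ (m - 1) * Real.sqrt t * Real.exp (-t)) ∧
    (∀ l : ℝ, -1 < l →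
      IntegrableOn (fun t : ℝ => Real.exp (-l * t) * varpi α m t) (Ioi (0 : ℝ)) volume) := by
  have hε : 0 < min (1 + α) 1 := lt_min (by linarith) one_pos
  have hϖ := gammaTypeBound_varpi hα m
  exact ⟨⟨_, by positivity, fun t _ => ⟨hϖ.nonneg t, hϖ.le t⟩⟩,
    fun _ hl => hϖ.integrableOn_exp_mul hl⟩

theorem stmt17 (α : ℝ) (hα : -1 < α) (m : ℕ) (hm : 2 ≤ m) :
    (∃ C : ℝ, 0 < C ∧ ∀ t : ℝ, 0 < t →
      0 ≤ varpi α m t ∧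
      varpi α m t ≤ C * t ^ (m - 1) * Real.sqrt t * Real.exp (-t)) ∧
    (∀ l : ℝ, -1 < l →
      IntegrableOn (fun t : ℝ => Real.exp (-l * t) * varpi α m t) (Ioi (0 : ℝ)) volume) :=
  stmt17_general α hα m
end
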